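/- arXiv:1609.05490 — 5 statements merged into one kernel-verified Lean document; each statement's English description precedes it below -/
import Mathlib

section
/- Let P > 0, h, a ∈ ℂ^L, let M = (1 + P‖h‖²)·I_L − P·h^H h, and let α_MMSE = P·⟨a,h⟩/(1 + P‖h‖²). Then |α_MMSE|² + P·‖α_MMSE·h − a‖² = P·(a M a^H)/(1 + P‖h‖²); consequently the minimum over α ∈ ℂ of |α|² + P·‖α·h − a‖² equals P·(a M a^H)/(1 + P‖h‖²), so that maximizing the compute-and-forward computation rate over coefficient vectors a is equivalent to minimizing the quadratic form a M a^H. -/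
/-!
Expanding the norm, `σ²(α) = |α|² + P‖αh − a‖²` is a real quadratic in `α` with leading
coefficient `D = 1 + P‖h‖² > 0`. Completing the square gives
`σ²(α) = D |α − α_MMSE|² + P (D‖a‖² − P|⟨a,h⟩|²) / D`, so `α_MMSE` is the minimiser and the
minimum is that constant. Finally `M = D·I − P·hᴴh` gives `a M aᴴ = D‖a‖² − P|⟨a,h⟩|²`.
-/

open Complex Finset Matrix
open scoped InnerProductSpace ComplexConjugate

section EffectiveNoise

variable {E : Type*} [NormedAddCommGroup E] [InnerProductSpace ℂ E]

noncomputable def effectiveNoiseVar (P : ℝ) (h a : E) (α : ℂ) : ℝ :=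
  ‖α‖ ^ 2 + P * ‖α • h - a‖ ^ 2

/-- Mathlib's `⟪h, a⟫_ℂ` is conjugate-linear in `h`, so it is the paper's `⟨a, h⟩`. -/
noncomputable def mmseCoeff (P : ℝ) (h a : E) : ℂ :=
  P * ⟪h, a⟫_ℂ / (1 + P * ‖h‖ ^ 2 : ℝ)

theorem effectiveNoiseVar_eq_quadratic (P : ℝ) (h a : E) (α : ℂ) :
    effectiveNoiseVar P h a α =
      (1 + P * ‖h‖ ^ 2) * ‖α‖ ^ 2 - 2 * P * (conj α * ⟪h, a⟫_ℂ).re + P * ‖a‖ ^ 2 := by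
  rw [effectiveNoiseVar, norm_sub_sq (𝕜 := ℂ), inner_smul_left, norm_smul, mul_pow,
    RCLike.re_to_complex]
  ring

theorem effectiveNoiseVar_eq_mul_norm_sub_mmseCoeff_sq_add (P : ℝ) (h a : E)
    (hD : 1 + P * ‖h‖ ^ 2 ≠ 0) (α : ℂ) :
    effectiveNoiseVar P h a α = (1 + P * ‖h‖ ^ 2) * ‖α - mmseCoeff P h a‖ ^ 2
      + (P * ‖a‖ ^ 2 - P ^ 2 * ‖⟪h, a⟫_ℂ‖ ^ 2 / (1 + P * ‖h‖ ^ 2)) := by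
  have hcoeff : mmseCoeff P h a = ((P / (1 + P * ‖h‖ ^ 2) : ℝ) : ℂ) * ⟪h, a⟫_ℂ := by
    rw [mmseCoeff]; push_cast; ring
  rw [effectiveNoiseVar_eq_quadratic, hcoeff, norm_sub_sq (𝕜 := ℂ), norm_mul, norm_real,
    Real.norm_eq_abs, mul_pow, sq_abs, RCLike.inner_apply, RCLike.re_to_complex]
  simp only [mul_re, mul_im, ofReal_re, ofReal_im]
  field_simp
  ring

theorem effectiveNoiseVar_mmseCoeff (P : ℝ) (h a : E) (hD : 1 + P * ‖h‖ ^ 2 ≠ 0) :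
    effectiveNoiseVar P h a (mmseCoeff P h a) =
      P * ((1 + P * ‖h‖ ^ 2) * ‖a‖ ^ 2 - P * ‖⟪h, a⟫_ℂ‖ ^ 2) / (1 + P * ‖h‖ ^ 2) := by
  rw [effectiveNoiseVar_eq_mul_norm_sub_mmseCoeff_sq_add P h a hD, sub_self, norm_zero]
  field_simp
  ring

theorem effectiveNoiseVar_mmseCoeff_le {P : ℝ} (hP : 0 ≤ P) (h a : E) (α : ℂ) :
    effectiveNoiseVar P h a (mmseCoeff P h a) ≤ effectiveNoiseVar P h a α := by
  have hD : 0 < 1 + P * ‖h‖ ^ 2 := by positivity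
  rw [effectiveNoiseVar_eq_mul_norm_sub_mmseCoeff_sq_add P h a hD.ne',
    effectiveNoiseVar_eq_mul_norm_sub_mmseCoeff_sq_add P h a hD.ne', sub_self, norm_zero]
  gcongr
  positivity

end EffectiveNoise

theorem dotProduct_smul_one_sub_smul_vecMulVec_mulVec_star {ι : Type*} [Fintype ι]
    [DecidableEq ι] (t P : ℝ) (h a : ι → ℂ) :
    a ⬝ᵥ ((t • 1 - P • vecMulVec (star h) h) *ᵥ star a)
      = t * (a ⬝ᵥ star a) - P * ((a ⬝ᵥ star h) * star (a ⬝ᵥ star h)) := by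
  rw [sub_mulVec, smul_mulVec, smul_mulVec, one_mulVec, vecMulVec_mulVec, op_smul_eq_smul,
    dotProduct_sub, dotProduct_smul, dotProduct_smul, dotProduct_smul, dotProduct_star h a,
    smul_eq_mul, real_smul, real_smul]
  ring

theorem re_dotProduct_smul_one_sub_smul_vecMulVec_mulVec_star {ι : Type*} [Fintype ι]
    [DecidableEq ι] (t P : ℝ) (h a : EuclideanSpace ℂ ι) :
    (a.ofLp ⬝ᵥ ((t • 1 - P • vecMulVec (star h.ofLp) h.ofLp) *ᵥ star a.ofLp)).re
      = t * ‖a‖ ^ 2 - P * ‖⟪h, a⟫_ℂ‖ ^ 2 := by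
  have haa : a.ofLp ⬝ᵥ star a.ofLp = ((‖a‖ ^ 2 : ℝ) : ℂ) := by
    rw [← EuclideanSpace.inner_eq_star_dotProduct]
    exact_mod_cast inner_self_eq_norm_sq_to_K a
  rw [dotProduct_smul_one_sub_smul_vecMulVec_mulVec_star, haa,
    ← EuclideanSpace.inner_eq_star_dotProduct, RCLike.star_def, mul_conj, normSq_eq_norm_sq,
    ← ofReal_mul, ← ofReal_mul, ← ofReal_sub, ofReal_re]

/-- For `P > 0`, `h, a ∈ ℂ^L`, `M = (1 + P‖h‖²)·I − P·hᴴh` and the MMSE coefficient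
`α_MMSE = P⟨a,h⟩/(1 + P‖h‖²)`, one has
`|α_MMSE|² + P‖α_MMSE·h − a‖² = P·(a M aᴴ)/(1 + P‖h‖²)`, and this value is the
minimum of `|α|² + P‖α·h − a‖²` over all `α ∈ ℂ`. -/
theorem mmse_value_eq_quadform (L : ℕ) (P : ℝ) (hP : 0 < P) (h a : Fin L → ℂ)
    (M : Matrix (Fin L) (Fin L) ℂ)
    (hM : M = (1 + P * ∑ l, ‖h l‖ ^ 2) • (1 : Matrix (Fin L) (Fin L) ℂ)
        - P • Matrix.of (fun m n => (starRingEnd ℂ) (h m) * h n))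
    (αM : ℂ)
    (hα : αM = (P : ℂ) * (∑ l, a l * (starRingEnd ℂ) (h l)) /
        (1 + (P : ℂ) * ((∑ l, ‖h l‖ ^ 2 : ℝ) : ℂ))) :
    (‖αM‖ ^ 2 + P * ∑ l, ‖αM * h l - a l‖ ^ 2 =
      P * Complex.re (∑ m, ∑ n, a m * M m n * (starRingEnd ℂ) (a n)) /
        (1 + P * ∑ l, ‖h l‖ ^ 2)) ∧
    (∀ α : ℂ,
      ‖αM‖ ^ 2 + P * ∑ l, ‖αM * h l - a l‖ ^ 2 ≤
        ‖α‖ ^ 2 + P * ∑ l, ‖α * h l - a l‖ ^ 2) := by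
  set x : EuclideanSpace ℂ (Fin L) := WithLp.toLp 2 h
  set y : EuclideanSpace ℂ (Fin L) := WithLp.toLp 2 a
  have hx : ∑ l, ‖h l‖ ^ 2 = ‖x‖ ^ 2 := (EuclideanSpace.norm_sq_eq x).symm
  have hσ (α : ℂ) : ‖α‖ ^ 2 + P * ∑ l, ‖α * h l - a l‖ ^ 2 = effectiveNoiseVar P x y α := by
    rw [effectiveNoiseVar, EuclideanSpace.norm_sq_eq]; rfl
  have hαM : αM = mmseCoeff P x y := by
    rw [hα, hx, mmseCoeff, EuclideanSpace.inner_eq_star_dotProduct]; push_cast; rfl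
  have hquad : (∑ m, ∑ n, a m * M m n * conj (a n)).re
      = (1 + P * ‖x‖ ^ 2) * ‖y‖ ^ 2 - P * ‖⟪x, y⟫_ℂ‖ ^ 2 := by
    rw [← hx, ← re_dotProduct_smul_one_sub_smul_vecMulVec_mulVec_star, dot_mulVec_eq_sum_sum,
      Finset.sum_comm, hM]
    rfl
  have hD : 1 + P * ‖x‖ ^ 2 ≠ 0 := by positivity
  refine ⟨?_, fun α => ?_⟩
  · rw [hσ, hαM, hquad, hx, effectiveNoiseVar_mmseCoeff P x y hD]
  · rw [hσ, hσ, hαM]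
    exact effectiveNoiseVar_mmseCoeff_le hP.le x y α
end

section
/- Let P > 0 and h, a ∈ ℂ^L. If there exists α ∈ ℂ with |α|² + P·‖α·h − a‖² < P (equivalently, if the compute-and-forward computation rate log⁺(P/(|α|² + P‖αh − a‖²)) is positive for some α), then ‖a‖² < 1 + P‖h‖². -/
/-!
By the triangle inequality `‖a‖ ≤ |α| ‖h‖ + ‖αh - a‖`, and by Cauchy–Schwarz applied to
`(|α|, √P ‖αh - a‖)` and `(√P ‖h‖, 1)`,
`P ‖a‖² ≤ (|α|² + P ‖αh - a‖²)(1 + P ‖h‖²) < P (1 + P ‖h‖²)`.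
-/

open Complex Finset

/-- The right side minus the left side is `(a - P * b * d) ^ 2`. -/
lemma mul_sq_mul_add_le (P a b d : ℝ) :
    P * (a * b + d) ^ 2 ≤ (a ^ 2 + P * d ^ 2) * (1 + P * b ^ 2) := by
  nlinarith [sq_nonneg (a - P * b * d)]

section NormedSpace

variable {𝕜 E : Type*} [NormedField 𝕜] [SeminormedAddCommGroup E] [NormedSpace 𝕜 E]

lemma norm_le_norm_mul_norm_add_norm_smul_sub (α : 𝕜) (x y : E) :
    ‖y‖ ≤ ‖α‖ * ‖x‖ + ‖α • x - y‖ := by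
  calc ‖y‖ = ‖α • x - (α • x - y)‖ := by rw [sub_sub_cancel]
    _ ≤ ‖α • x‖ + ‖α • x - y‖ := norm_sub_le _ _
    _ = ‖α‖ * ‖x‖ + ‖α • x - y‖ := by rw [norm_smul]

lemma mul_norm_sq_le {P : ℝ} (hP : 0 ≤ P) (α : 𝕜) (x y : E) :
    P * ‖y‖ ^ 2 ≤ (‖α‖ ^ 2 + P * ‖α • x - y‖ ^ 2) * (1 + P * ‖x‖ ^ 2) := by
  have hy : ‖y‖ ^ 2 ≤ (‖α‖ * ‖x‖ + ‖α • x - y‖) ^ 2 :=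
    pow_le_pow_left₀ (norm_nonneg y) (norm_le_norm_mul_norm_add_norm_smul_sub α x y) 2
  exact (mul_le_mul_of_nonneg_left hy hP).trans (mul_sq_mul_add_le P _ _ _)

lemma norm_sq_lt_of_exists_smul_sub {P : ℝ} (hP : 0 < P) {x y : E}
    (h : ∃ α : 𝕜, ‖α‖ ^ 2 + P * ‖α • x - y‖ ^ 2 < P) :
    ‖y‖ ^ 2 < 1 + P * ‖x‖ ^ 2 := by
  obtain ⟨α, hα⟩ := h
  have hx : 0 < 1 + P * ‖x‖ ^ 2 := by positivity
  refine lt_of_mul_lt_mul_left ?_ hP.le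
  calc P * ‖y‖ ^ 2 ≤ (‖α‖ ^ 2 + P * ‖α • x - y‖ ^ 2) * (1 + P * ‖x‖ ^ 2) :=
        mul_norm_sq_le hP.le α x y
    _ < P * (1 + P * ‖x‖ ^ 2) := mul_lt_mul_of_pos_right hα hx

end NormedSpace

/-- If the compute-and-forward rate is positive for some `α`, i.e.
`|α|² + P‖αh − a‖² < P` for some `α ∈ ℂ`, then `‖a‖² < 1 + P‖h‖²`. -/
theorem cf_coeff_bound (L : ℕ) (P : ℝ) (hP : 0 < P) (h a : Fin L → ℂ)
    (hpos : ∃ α : ℂ,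
      ‖α‖ ^ 2 + P * ∑ l, ‖α * h l - a l‖ ^ 2 < P) :
    (∑ l, ‖a l‖ ^ 2) < 1 + P * ∑ l, ‖h l‖ ^ 2 := by
  have hnorm (v : Fin L → ℂ) : ∑ l, ‖v l‖ ^ 2 = ‖WithLp.toLp 2 v‖ ^ 2 :=
    (EuclideanSpace.norm_sq_eq _).symm
  obtain ⟨α, hα⟩ := hpos
  have hdiff : (fun l => α * h l - a l) = α • h - a := rfl
  rw [hnorm, hdiff, WithLp.toLp_sub, WithLp.toLp_smul] at hα
  rw [hnorm, hnorm]
  exact norm_sq_lt_of_exists_smul_sub hP ⟨α, hα⟩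
end

section
/- Let P > 0 and h, a ∈ ℂ^L, and let M = (1 + P‖h‖²)·I_L − P·h^H h. Then there exists α ∈ ℂ with |α|² + P·‖α·h − a‖² < P if and only if a M a^H < 1 + P‖h‖²; that is, the compute-and-forward computation rate for coefficient vector a is positive exactly when the quadratic form a M a^H is smaller than 1 + P‖h‖². -/
open Complex Finset Matrix
open scoped ComplexConjugate InnerProductSpace

/-!
Completing the square in `α`: with `c = 1 + P‖h‖²` and `z = ⟪h, a⟫`,
`c · (|α|² + P‖αh − a‖²) = |cα − Pz|² + P · (c‖a‖² − P|z|²)`, and `c‖a‖² − P|z|²` is exactly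
`a M aᴴ`. Hence the infimum over `α` of `|α|² + P‖αh − a‖²` is `P · a M aᴴ / c`, attained at
`α = Pz / c`, and it is below `P` iff `a M aᴴ < c`.
-/

section CompletingTheSquare

variable {𝕜 E : Type*} [RCLike 𝕜] [NormedAddCommGroup E] [InnerProductSpace 𝕜 E]

theorem mul_norm_sq_add_norm_smul_sub_sq (P : ℝ) (α : 𝕜) (v w : E) :
    (1 + P * ‖v‖ ^ 2) * (‖α‖ ^ 2 + P * ‖α • v - w‖ ^ 2) =
      ‖((1 + P * ‖v‖ ^ 2 : ℝ) : 𝕜) * α - P * ⟪v, w⟫_𝕜‖ ^ 2 +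
        P * ((1 + P * ‖v‖ ^ 2) * ‖w‖ ^ 2 - P * ‖⟪v, w⟫_𝕜‖ ^ 2) := by
  rw [@norm_sub_sq 𝕜, @norm_sub_sq 𝕜, inner_smul_left, norm_smul, norm_mul, norm_mul]
  simp only [RCLike.inner_apply, map_mul, RCLike.conj_ofReal, RCLike.mul_re, RCLike.mul_im,
    RCLike.ofReal_re, RCLike.ofReal_im, RCLike.conj_re, RCLike.conj_im, RCLike.norm_ofReal,
    mul_pow, sq_abs]
  ring

theorem exists_norm_sq_add_norm_smul_sub_sq_lt_iff {P : ℝ} (hP : 0 ≤ P) (v w : E) (r : ℝ) :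
    (∃ α : 𝕜, ‖α‖ ^ 2 + P * ‖α • v - w‖ ^ 2 < r) ↔
      P * ((1 + P * ‖v‖ ^ 2) * ‖w‖ ^ 2 - P * ‖⟪v, w⟫_𝕜‖ ^ 2) < (1 + P * ‖v‖ ^ 2) * r := by
  set c : ℝ := 1 + P * ‖v‖ ^ 2
  have hc : 0 < c := by positivity
  constructor
  · rintro ⟨α, hα⟩
    have hsq := mul_norm_sq_add_norm_smul_sub_sq P α v w
    nlinarith [norm_nonneg ((c : 𝕜) * α - P * ⟪v, w⟫_𝕜), mul_lt_mul_of_pos_left hα hc]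
  · intro hlt
    refine ⟨P * ⟪v, w⟫_𝕜 / (c : 𝕜), lt_of_mul_lt_mul_left ?_ hc.le⟩
    have hc' : (c : 𝕜) ≠ 0 := RCLike.ofReal_ne_zero.2 hc.ne'
    rwa [mul_norm_sq_add_norm_smul_sub_sq, mul_div_cancel₀ _ hc', sub_self, norm_zero,
      zero_pow two_ne_zero, zero_add]

end CompletingTheSquare

theorem re_quadForm_smul_one_sub_smul_rankOne {ι : Type*} [Fintype ι] [DecidableEq ι]
    (c P : ℝ) (h a : ι → ℂ) :
    (∑ m, ∑ n, a m * (c • (1 : Matrix ι ι ℂ) - P • Matrix.of (fun m n => conj (h m) * h n)) m n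
      * conj (a n)).re = c * ∑ l, ‖a l‖ ^ 2 - P * ‖∑ l, conj (h l) * a l‖ ^ 2 := by
  set z := ∑ l, conj (h l) * a l
  have hrankOne : ∑ m, ∑ n, a m * (P * (conj (h m) * h n)) * conj (a n) = P * (z * conj z) := by
    rw [map_sum, sum_mul_sum, mul_sum]
    simp only [map_mul, conj_conj, mul_sum]
    exact sum_congr rfl fun _ _ => sum_congr rfl fun _ _ => by ring
  simp only [Matrix.sub_apply, Matrix.smul_apply, one_apply, of_apply, mul_sub, sub_mul,
    sum_sub_distrib, Complex.real_smul, mul_ite, ite_mul, mul_one, mul_zero, zero_mul, sum_ite_eq,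
    mem_univ, if_true, hrankOne, mul_right_comm _ (c : ℂ), Complex.mul_conj', ← sum_mul]
  norm_cast
  ring

/-- With `M = (1 + P‖h‖²)·I − P·hᴴh`, there exists `α ∈ ℂ` with
`|α|² + P‖αh − a‖² < P` if and only if `a M aᴴ < 1 + P‖h‖²`. -/
theorem cf_rate_pos_iff_quadform (L : ℕ) (P : ℝ) (hP : 0 < P) (h a : Fin L → ℂ)
    (M : Matrix (Fin L) (Fin L) ℂ)
    (hM : M = (1 + P * ∑ l, ‖h l‖ ^ 2) • (1 : Matrix (Fin L) (Fin L) ℂ)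
        - P • Matrix.of (fun m n => (starRingEnd ℂ) (h m) * h n)) :
    (∃ α : ℂ,
      ‖α‖ ^ 2 + P * ∑ l, ‖α * h l - a l‖ ^ 2 < P) ↔
    Complex.re (∑ m, ∑ n, a m * M m n * (starRingEnd ℂ) (a n)) <
      1 + P * ∑ l, ‖h l‖ ^ 2 := by
  let v : EuclideanSpace ℂ (Fin L) := WithLp.toLp 2 h
  let w : EuclideanSpace ℂ (Fin L) := WithLp.toLp 2 a
  have hv : ∑ l, ‖h l‖ ^ 2 = ‖v‖ ^ 2 := (EuclideanSpace.norm_sq_eq v).symm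
  have hw : ∑ l, ‖a l‖ ^ 2 = ‖w‖ ^ 2 := (EuclideanSpace.norm_sq_eq w).symm
  have hvw : ∑ l, conj (h l) * a l = ⟪v, w⟫_ℂ := by
    rw [EuclideanSpace.inner_toLp_toLp]
    exact sum_congr rfl fun l _ => mul_comm _ _
  have hobj (α : ℂ) : ∑ l, ‖α * h l - a l‖ ^ 2 = ‖α • v - w‖ ^ 2 :=
    (EuclideanSpace.norm_sq_eq (α • v - w)).symm
  simp_rw [hM, re_quadForm_smul_one_sub_smul_rankOne, hobj, hv, hw, hvw]
  rw [exists_norm_sq_add_norm_smul_sub_sq_lt_iff hP.le, mul_comm _ P,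
    mul_lt_mul_iff_of_pos_left hP]
end

section
/- (Theorem 1, single receive antenna, Gaussian integers.) Let P > 0, h ∈ ℂ^L, M = (1 + P‖h‖²)·I_L − P·h^H h, and suppose a is a nonzero Gaussian integer vector in ℂ^L that minimizes the quadratic form a' M (a')^H over all nonzero Gaussian integer vectors a' ∈ ℂ^L. Then either a is a unit vector in ℤ[i]^L, or, setting α = P·⟨a,h⟩/(1 + P‖h‖²), for every index l the component a_l is a nearest Gaussian integer to α·h_l. -/
/-!
Write `f(a) = c‖a‖² - P|⟨a,h⟩|²`, `c = 1 + P‖h‖²`, for the quadratic form `a M aᴴ`. Changing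
the coordinate `a_l` to `g` changes `f` by `c (|g - α h_l|² - |a_l - α h_l|²) - P |g - a_l|² |h_l|²`,
so moving one coordinate strictly closer to `α h_l` strictly decreases `f`. For a minimizer the
modified vector must therefore be `0`, i.e. `a = a_l e_l`; then
`f(a) = |a_l|² (c - P|h_l|²) ≤ f(e_l) = c - P|h_l|²` with `c - P|h_l|² ≥ 1`, so `a_l` is a unit.
-/

open Complex Finset Matrix

/-- `z ∈ ℂ` is a Gaussian integer. -/
def IsGaussInt (z : ℂ) : Prop := ∃ m n : ℤ, z = (m : ℂ) + (n : ℂ) * Complex.I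

/-- `a ∈ ℂ^L` is a Gaussian integer vector. -/
def IsGaussVec {L : ℕ} (a : Fin L → ℂ) : Prop := ∀ l, IsGaussInt (a l)

/-- `a` is a unit vector in `ℤ[i]^L`: exactly one nonzero component, equal to a
unit `1, -1, i, -i` of the Gaussian integers. -/
def IsGaussUnitVec {L : ℕ} (a : Fin L → ℂ) : Prop :=
  ∃ l₀ : Fin L, (a l₀ = 1 ∨ a l₀ = -1 ∨ a l₀ = Complex.I ∨ a l₀ = -Complex.I) ∧
    ∀ l, l ≠ l₀ → a l = 0

/-- `g` is a nearest Gaussian integer to `x`. -/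
def IsNearestGauss (x g : ℂ) : Prop :=
  IsGaussInt g ∧ ∀ g' : ℂ, IsGaussInt g' → ‖x - g‖ ≤ ‖x - g'‖

open scoped ComplexConjugate

open Function

section QuadForm

variable {ι : Type*} [Fintype ι]

theorem sum_apply_update [DecidableEq ι] {α β : Type*} [AddCommGroup β] (φ : ι → α → β)
    (a : ι → α) (l : ι) (g : α) :
    ∑ j, φ j (update a l g j) = ∑ j, φ j (a j) + (φ l g - φ l (a l)) := by
  simp_rw [apply_update φ]
  rw [sum_update_of_mem (mem_univ l), ← add_sum_erase _ _ (mem_univ l), sdiff_singleton_eq_erase]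
  abel

def cfQuadForm (c P : ℝ) (h a : ι → ℂ) : ℝ :=
  c * ∑ l, normSq (a l) - P * normSq (∑ l, a l * conj (h l))

theorem sum_mul_mul_conj_eq_cfQuadForm [DecidableEq ι] (c P : ℝ) (h a : ι → ℂ) :
    ∑ m, ∑ n, a m * (c • (1 : Matrix ι ι ℂ) - P • Matrix.of (fun m n => conj (h m) * h n)) m n
      * conj (a n) = cfQuadForm c P h a := by
  simp only [cfQuadForm, Matrix.sub_apply, Matrix.smul_apply, one_apply, of_apply, real_smul,
    mul_ite, mul_one, mul_zero, mul_sub, sub_mul, ite_mul, zero_mul, sum_sub_distrib, sum_ite_eq,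
    mem_univ, if_true, ofReal_sub, ofReal_mul, ofReal_sum, ← mul_conj, map_sum, map_mul,
    conj_conj, mul_sum, sum_mul]
  congr 1
  · exact sum_congr rfl fun _ _ => by ring
  · rw [sum_comm]
    exact sum_congr rfl fun _ _ => sum_congr rfl fun _ _ => by ring

theorem cfQuadForm_update [DecidableEq ι] {c : ℝ} (hc : c ≠ 0) (P : ℝ) (h a : ι → ℂ) (l : ι)
    (g : ℂ) :
    cfQuadForm c P h (update a l g) = cfQuadForm c P h a
      + c * (normSq (P * (∑ j, a j * conj (h j)) / c * h l - g)
        - normSq (P * (∑ j, a j * conj (h j)) / c * h l - a l))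
      - P * normSq (g - a l) * normSq (h l) := by
  simp only [cfQuadForm, sum_apply_update (fun _ => normSq),
    sum_apply_update (fun j z => z * conj (h j)), ← sub_mul]
  simp only [normSq_apply, add_re, add_im, sub_re, sub_im, mul_re, mul_im, div_ofReal_re,
    div_ofReal_im, ofReal_re, ofReal_im, conj_re, conj_im]
  field_simp
  ring

theorem cfQuadForm_update_lt [DecidableEq ι] {c P : ℝ} (hc : 0 < c) (hP : 0 ≤ P)
    {h a : ι → ℂ} {l : ι} {g : ℂ}
    (hg : ‖P * (∑ j, a j * conj (h j)) / c * h l - g‖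
      < ‖P * (∑ j, a j * conj (h j)) / c * h l - a l‖) :
    cfQuadForm c P h (update a l g) < cfQuadForm c P h a := by
  rw [← sq_lt_sq₀ (norm_nonneg _) (norm_nonneg _), Complex.sq_norm, Complex.sq_norm] at hg
  rw [cfQuadForm_update hc.ne']
  nlinarith [mul_nonneg hP (mul_nonneg (normSq_nonneg (g - a l)) (normSq_nonneg (h l)))]

theorem cfQuadForm_single [DecidableEq ι] (c P : ℝ) (h : ι → ℂ) (l : ι) (z : ℂ) :
    cfQuadForm c P h (Pi.single l z) = normSq z * (c - P * normSq (h l)) := by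
  simp only [cfQuadForm, Pi.single_apply, apply_ite normSq, ite_mul, zero_mul, map_zero,
    sum_ite_eq', mem_univ, if_true, normSq_mul, normSq_conj]
  ring

end QuadForm

theorem isGaussInt_zero : IsGaussInt 0 := ⟨0, 0, by simp⟩

theorem isGaussInt_one : IsGaussInt 1 := ⟨1, 0, by simp⟩

theorem IsGaussInt.eq_unit_of_normSq_le_one {z : ℂ} (hz : IsGaussInt z) (hz0 : z ≠ 0)
    (hz1 : normSq z ≤ 1) : z = 1 ∨ z = -1 ∨ z = I ∨ z = -I := by
  obtain ⟨m, n, rfl⟩ := hz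
  have hmn : m ^ 2 + n ^ 2 ≤ 1 := by
    have := normSq_add_mul_I m n
    push_cast at this
    exact_mod_cast this ▸ hz1
  obtain ⟨hm₁, hm₂⟩ : -1 ≤ m ∧ m ≤ 1 := ⟨by nlinarith, by nlinarith⟩
  obtain ⟨hn₁, hn₂⟩ : -1 ≤ n ∧ n ≤ 1 := ⟨by nlinarith, by nlinarith⟩
  interval_cases m <;> interval_cases n <;> simp_all

section GaussVec

variable {L : ℕ}

theorem IsGaussVec.update {a : Fin L → ℂ} (ha : IsGaussVec a) (l : Fin L) {g : ℂ}
    (hg : IsGaussInt g) : IsGaussVec (update a l g) := fun j => by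
  rcases eq_or_ne j l with rfl | hj
  · simpa using hg
  · simpa [hj] using ha j

theorem isGaussVec_single_one (l : Fin L) : IsGaussVec (Pi.single l (1 : ℂ)) :=
  IsGaussVec.update (fun _ => isGaussInt_zero) l isGaussInt_one

theorem isGaussUnitVec_of_forall_ne_eq_zero {c P : ℝ} {h a : Fin L → ℂ} {l : Fin L}
    (ha : IsGaussVec a) (ha0 : a ≠ 0) (hsupp : ∀ j ≠ l, a j = 0)
    (hd : 0 < c - P * normSq (h l))
    (hle : cfQuadForm c P h a ≤ cfQuadForm c P h (Pi.single l 1)) : IsGaussUnitVec a := by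
  have ha_eq : a = Pi.single l (a l) := funext fun j => by
    rcases eq_or_ne j l with rfl | hj
    · simp
    · simp [hj, hsupp j hj]
  have hal : a l ≠ 0 := fun h0 => ha0 (by rw [ha_eq, h0, Pi.single_zero])
  rw [ha_eq, cfQuadForm_single, cfQuadForm_single, normSq_one, one_mul] at hle
  exact ⟨l, (ha l).eq_unit_of_normSq_le_one hal ((mul_le_iff_le_one_left hd).mp hle), hsupp⟩

end GaussVec

/-- Theorem 1 (single receive antenna, Gaussian integers): any nonzero Gaussian
integer vector minimizing the quadratic form `a M aᴴ` with
`M = (1 + P‖h‖²)·I − P·hᴴh` is either a unit vector of `ℤ[i]^L`, or satisfies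
`a = [α·h]` componentwise, where `α = P⟨a,h⟩/(1 + P‖h‖²)` is the MMSE coefficient. -/
theorem cf_opt_coeff_gaussian (L : ℕ) (P : ℝ) (hP : 0 < P) (h : Fin L → ℂ)
    (M : Matrix (Fin L) (Fin L) ℂ)
    (hM : M = (1 + P * ∑ l, ‖h l‖ ^ 2) • (1 : Matrix (Fin L) (Fin L) ℂ)
        - P • Matrix.of (fun m n => (starRingEnd ℂ) (h m) * h n))
    (a : Fin L → ℂ) (ha : IsGaussVec a) (ha0 : a ≠ 0)
    (hmin : ∀ a' : Fin L → ℂ, IsGaussVec a' → a' ≠ 0 →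
      Complex.re (∑ m, ∑ n, a m * M m n * (starRingEnd ℂ) (a n)) ≤
        Complex.re (∑ m, ∑ n, a' m * M m n * (starRingEnd ℂ) (a' n))) :
    IsGaussUnitVec a ∨
      (∀ l : Fin L,
        IsNearestGauss
          (((P : ℂ) * (∑ l', a l' * (starRingEnd ℂ) (h l')) /
              (1 + (P : ℂ) * ((∑ l', ‖h l'‖ ^ 2 : ℝ) : ℂ))) * h l)
          (a l)) := by
  set c : ℝ := 1 + P * ∑ l, ‖h l‖ ^ 2 with hc
  have hmin' : ∀ a', IsGaussVec a' → a' ≠ 0 → cfQuadForm c P h a ≤ cfQuadForm c P h a' :=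
    fun a' ha' ha'0 => by
      simpa only [hM, sum_mul_mul_conj_eq_cfQuadForm, ofReal_re] using hmin a' ha' ha'0
  by_cases hu : IsGaussUnitVec a
  · exact .inl hu
  refine .inr fun l => ⟨ha l, fun g hg => ?_⟩
  by_contra! hlt
  have hdecr : cfQuadForm c P h (update a l g) < cfQuadForm c P h a :=
    cfQuadForm_update_lt (by positivity) hP.le <| by
      rwa [hc, ofReal_add, ofReal_one, ofReal_mul]
  have hupd : update a l g = 0 := by
    by_contra hne
    exact (hmin' _ (ha.update l hg) hne).not_gt hdecr
  have hsupp : ∀ j ≠ l, a j = 0 := fun j hj => by simpa [hj] using congrFun hupd j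
  have hhl : normSq (h l) ≤ ∑ j, ‖h j‖ ^ 2 := by
    rw [← Complex.sq_norm]
    exact single_le_sum (f := fun j => ‖h j‖ ^ 2) (fun j _ => by positivity) (mem_univ l)
  exact hu (isGaussUnitVec_of_forall_ne_eq_zero ha ha0 hsupp (by nlinarith)
    (hmin' _ (isGaussVec_single_one l) (by simp)))
end

section
/- (Theorem 1, MIMO compute-and-forward, Eisenstein integers.) Let P > 0 and let H be a k×L complex matrix. Suppose b ∈ ℂ^k and a is a nonzero Eisenstein integer vector in ℂ^L such that ‖b‖² + P·‖bH − a‖² ≤ ‖b'‖² + P·‖b'H − a'‖² for every b' ∈ ℂ^k and every nonzero Eisenstein integer vector a' ∈ ℂ^L. Then either a is a unit vector in ℤ[ω]^L, or for every index l the component a_l is a nearest Eisenstein integer to (bH)_l. -/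
open Complex Finset Matrix

/-!
If some `a_l` is not a nearest Eisenstein integer to `(bH)_l`, replacing it by a nearer one
strictly lowers the cost, so by optimality the modified vector must be zero: `a` is supported
on `l` alone. Rescaling `(b, a)` by `a_l⁻¹` multiplies the (positive) cost by `|a_l|⁻²` and
yields the competitor `(b / a_l, e_l)`, hence `|a_l| ≤ 1`. The only nonzero Eisenstein
integers of absolute value at most `1` are the six units, as `|m + nω|² = m² - mn + n²`.
-/

/-- The primitive sixth root of unity `ω = −1/2 + i√3/2`. -/
noncomputable def eisω : ℂ := -(1 / 2) + ((Real.sqrt 3 / 2 : ℝ) : ℂ) * Complex.I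

/-- `z ∈ ℂ` is an Eisenstein integer. -/
def IsEisInt (z : ℂ) : Prop := ∃ m n : ℤ, z = (m : ℂ) + (n : ℂ) * eisω

/-- `a ∈ ℂ^L` is an Eisenstein integer vector. -/
def IsEisVec {L : ℕ} (a : Fin L → ℂ) : Prop := ∀ l, IsEisInt (a l)

/-- `a` is a unit vector in `ℤ[ω]^L`: exactly one nonzero component, equal to a
unit `±1, ±ω, ±ω²` of the Eisenstein integers. -/
def IsEisUnitVec {L : ℕ} (a : Fin L → ℂ) : Prop :=
  ∃ l₀ : Fin L,
    (a l₀ = 1 ∨ a l₀ = -1 ∨ a l₀ = eisω ∨ a l₀ = -eisω ∨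
      a l₀ = eisω ^ 2 ∨ a l₀ = -eisω ^ 2) ∧
    ∀ l, l ≠ l₀ → a l = 0

/-- `e` is a nearest Eisenstein integer to `x`. -/
def IsNearestEis (x e : ℂ) : Prop :=
  IsEisInt e ∧ ∀ e' : ℂ, IsEisInt e' → ‖x - e‖ ≤ ‖x - e'‖

theorem eisω_sq : eisω ^ 2 = -eisω - 1 := by
  have h3 : ((Real.sqrt 3 : ℝ) : ℂ) ^ 2 = 3 := by
    rw [← ofReal_pow, Real.sq_sqrt (by norm_num)]; norm_num
  unfold eisω
  push_cast
  linear_combination (I ^ 2 / 4) * h3 + (3 / 4) * I_sq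

theorem normSq_intCast_add_intCast_mul_eisω (m n : ℤ) :
    normSq ((m : ℂ) + (n : ℂ) * eisω) = ((m ^ 2 - m * n + n ^ 2 : ℤ) : ℝ) := by
  have hre : ((m : ℂ) + (n : ℂ) * eisω).re = m - n / 2 := by simp [eisω]; ring
  have him : ((m : ℂ) + (n : ℂ) * eisω).im = n * (Real.sqrt 3 / 2) := by simp [eisω]
  have h3 : Real.sqrt 3 ^ 2 = 3 := Real.sq_sqrt (by norm_num)
  rw [normSq_apply, hre, him]
  push_cast
  linear_combination (n : ℝ) ^ 2 / 4 * h3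

theorem IsEisInt.eq_unit_of_norm_le_one {z : ℂ} (hz : IsEisInt z) (h0 : z ≠ 0)
    (h1 : ‖z‖ ≤ 1) :
    z = 1 ∨ z = -1 ∨ z = eisω ∨ z = -eisω ∨ z = eisω ^ 2 ∨ z = -eisω ^ 2 := by
  obtain ⟨m, n, rfl⟩ := hz
  have hq : m ^ 2 - m * n + n ^ 2 ≤ 1 := by
    have : normSq ((m : ℂ) + (n : ℂ) * eisω) ≤ 1 := by
      rw [← Complex.sq_norm]; exact pow_le_one₀ (norm_nonneg _) h1
    exact_mod_cast normSq_intCast_add_intCast_mul_eisω m n ▸ this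
  -- `4 (m² - mn + n²) = (2n - m)² + 3m² = (2m - n)² + 3n²`
  have hm : -1 ≤ m ∧ m ≤ 1 := by constructor <;> nlinarith [sq_nonneg (2 * n - m)]
  have hn : -1 ≤ n ∧ n ≤ 1 := by constructor <;> nlinarith [sq_nonneg (2 * m - n)]
  obtain ⟨hm₁, hm₂⟩ := hm
  obtain ⟨hn₁, hn₂⟩ := hn
  interval_cases m <;> interval_cases n <;> norm_num at hq <;> norm_num at h0 <;>
    simp only [eisω_sq] <;> push_cast <;> ring_nf <;> simp

theorem sum_norm_sq_pos {α E : Type*} [Fintype α] [NormedAddCommGroup E] {v : α → E}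
    (hv : v ≠ 0) : 0 < ∑ i, ‖v i‖ ^ 2 := by
  obtain ⟨i, hi⟩ := Function.ne_iff.mp hv
  exact Finset.sum_pos' (fun _ _ => by positivity)
    ⟨i, Finset.mem_univ _, pow_pos (norm_pos_iff.mpr hi) 2⟩

section Cost

variable {ι κ : Type*} [Fintype ι] [Fintype κ]

noncomputable def cfCost (P : ℝ) (H : Matrix ι κ ℂ) (b : ι → ℂ) (a : κ → ℂ) : ℝ :=
  (∑ j, ‖b j‖ ^ 2) + P * ∑ l, ‖vecMul b H l - a l‖ ^ 2

theorem cfCost_smul (P : ℝ) (H : Matrix ι κ ℂ) (b : ι → ℂ) (a : κ → ℂ) (c : ℂ) :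
    cfCost P H (c • b) (c • a) = ‖c‖ ^ 2 * cfCost P H b a := by
  simp only [cfCost, smul_vecMul, Pi.smul_apply, smul_eq_mul, ← mul_sub, norm_mul, mul_pow,
    ← Finset.mul_sum]
  ring

theorem cfCost_pos {P : ℝ} (hP : 0 < P) (H : Matrix ι κ ℂ) (b : ι → ℂ) {a : κ → ℂ}
    (ha : a ≠ 0) : 0 < cfCost P H b a := by
  unfold cfCost
  by_cases hb : b = 0
  · subst hb
    simpa using mul_pos hP (sum_norm_sq_pos ha)
  · have : 0 ≤ P * ∑ l, ‖vecMul b H l - a l‖ ^ 2 := by positivity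
    linarith [sum_norm_sq_pos hb]

theorem cfCost_update_lt [DecidableEq κ] {P : ℝ} (hP : 0 < P) (H : Matrix ι κ ℂ)
    (b : ι → ℂ) (a : κ → ℂ) {l : κ} {e : ℂ}
    (he : ‖vecMul b H l - e‖ < ‖vecMul b H l - a l‖) :
    cfCost P H b (Function.update a l e) < cfCost P H b a := by
  unfold cfCost
  gcongr ?_ + P * ?_
  refine Finset.sum_lt_sum (fun i _ => ?_) ⟨l, Finset.mem_univ l, ?_⟩
  · rcases eq_or_ne i l with rfl | hi
    · simpa using pow_le_pow_left₀ (norm_nonneg _) he.le 2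
    · simp [hi]
  · simpa using pow_lt_pow_left₀ he (norm_nonneg _) two_ne_zero

end Cost

theorem isEisInt_zero : IsEisInt 0 := ⟨0, 0, by simp⟩

theorem isEisInt_one : IsEisInt 1 := ⟨1, 0, by simp⟩

theorem IsEisVec.update {L : ℕ} {a : Fin L → ℂ} (ha : IsEisVec a) (l : Fin L) {e : ℂ}
    (he : IsEisInt e) : IsEisVec (Function.update a l e) := fun i => by
  rcases eq_or_ne i l with rfl | hi
  · simpa using he
  · simpa [hi] using ha i

theorem isEisVec_single {L : ℕ} (l : Fin L) {e : ℂ} (he : IsEisInt e) :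
    IsEisVec (Pi.single l e) :=
  IsEisVec.update (fun _ => isEisInt_zero) l he

def IsCFOptimal {ι : Type*} [Fintype ι] {L : ℕ} (P : ℝ) (H : Matrix ι (Fin L) ℂ)
    (b : ι → ℂ) (a : Fin L → ℂ) : Prop :=
  IsEisVec a ∧ a ≠ 0 ∧
    ∀ b' a', IsEisVec a' → a' ≠ 0 → cfCost P H b a ≤ cfCost P H b' a'

namespace IsCFOptimal

variable {ι : Type*} [Fintype ι] {L : ℕ} {P : ℝ} {H : Matrix ι (Fin L) ℂ} {b : ι → ℂ}
  {a : Fin L → ℂ}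

theorem norm_le_one_of_eq_single (hP : 0 < P) (h : IsCFOptimal P H b a) {l : Fin L} {z : ℂ}
    (ha : a = Pi.single l z) : ‖z‖ ≤ 1 := by
  obtain ⟨-, ha0, hmin⟩ := h
  have hz : z ≠ 0 := by rintro rfl; exact ha0 (by simp [ha])
  have hscaled : z⁻¹ • a = Pi.single l 1 := by
    rw [ha, ← Pi.single_smul', smul_eq_mul, inv_mul_cancel₀ hz]
  have hle := hmin (z⁻¹ • b) _ (isEisVec_single l isEisInt_one) (by simp)
  rw [← hscaled, cfCost_smul, norm_inv] at hle
  have hpos := cfCost_pos hP H b ha0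
  have : 1 ≤ ‖z‖⁻¹ ^ 2 := by nlinarith
  rw [inv_pow, one_le_inv₀ (by positivity)] at this
  exact (sq_le_one_iff₀ (norm_nonneg z)).mp this

theorem isNearestEis_or_eq_single (hP : 0 < P) (h : IsCFOptimal P H b a) (l : Fin L) :
    IsNearestEis (vecMul b H l) (a l) ∨ a = Pi.single l (a l) := by
  by_contra! ⟨hnear, hsingle⟩
  obtain ⟨e, he, hlt⟩ :
      ∃ e, IsEisInt e ∧ ‖vecMul b H l - e‖ < ‖vecMul b H l - a l‖ := by
    simpa [IsNearestEis, h.1 l] using hnear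
  have hupdate : Function.update a l e ≠ 0 := fun h0 => hsingle <| funext fun i => by
    rcases eq_or_ne i l with rfl | hi
    · simp
    · simpa [hi] using congrFun h0 i
  exact (cfCost_update_lt hP H b a hlt).not_ge (h.2.2 b _ (h.1.update l he) hupdate)

end IsCFOptimal

/-- Theorem 1 (MIMO compute-and-forward, Eisenstein integers): if `(b, a)` minimizes
`‖b‖² + P‖bH − a‖²` over all `b' ∈ ℂ^k` and all nonzero Eisenstein integer vectors
`a' ∈ ℂ^L`, then either `a` is a unit vector in `ℤ[ω]^L`, or `a = [bH]_{ℤ[ω]}`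
componentwise. -/
theorem mimo_cf_opt_coeff_eisenstein (k L : ℕ) (P : ℝ) (hP : 0 < P)
    (H : Matrix (Fin k) (Fin L) ℂ) (b : Fin k → ℂ)
    (a : Fin L → ℂ) (ha : IsEisVec a) (ha0 : a ≠ 0)
    (hmin : ∀ (b' : Fin k → ℂ) (a' : Fin L → ℂ), IsEisVec a' → a' ≠ 0 →
      (∑ j, ‖b j‖ ^ 2) +
          P * ∑ l, ‖Matrix.vecMul b H l - a l‖ ^ 2 ≤
        (∑ j, ‖b' j‖ ^ 2) +
          P * ∑ l, ‖Matrix.vecMul b' H l - a' l‖ ^ 2) :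
    IsEisUnitVec a ∨
      (∀ l : Fin L, IsNearestEis (Matrix.vecMul b H l) (a l)) := by
  have hopt : IsCFOptimal P H b a := ⟨ha, ha0, hmin⟩
  refine or_iff_not_imp_right.mpr fun hnear => ?_
  obtain ⟨l, hl⟩ := not_forall.mp hnear
  have hsingle := (hopt.isNearestEis_or_eq_single hP l).resolve_left hl
  have hal : a l ≠ 0 := fun h => ha0 (by rw [hsingle, h, Pi.single_zero])
  refine ⟨l, (ha l).eq_unit_of_norm_le_one hal (hopt.norm_le_one_of_eq_single hP hsingle),
    fun i hi => ?_⟩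
  rw [hsingle, Pi.single_eq_of_ne hi]
end
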